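/- In the group Γ₀' = (⊕_{i∈ℤ} ℤ) × (⊕_{i>0} ℤ) with product ((aᵢ),(bᵢ))·((cᵢ),(dᵢ)) = ((aᵢ+cᵢ), (bᵢ+dᵢ+Σ_{l−k=i} a_l c_k)), let eⱼ denote the element whose first coordinate is the standard basis vector at position j and whose second coordinate is zero. Then for all i, j ∈ ℤ with j > i, the commutator [eᵢ, eⱼ] = eᵢ⁻¹ eⱼ⁻¹ eᵢ eⱼ equals the element whose first coordinate is zero and whose second coordinate is the negative standard basis vector at position j − i; in particular [eᵢ, eⱼ] depends only on j − i, and [eᵢ, eⱼ] = [eⱼ, eᵢ]⁻¹. -/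

import Mathlib

/-- Positive integers, the index set for the second coordinate. -/
abbrev PosZ : Type := {i : ℤ // 0 < i}

/-- The carrier `Γ₀' = (⊕_{i∈ℤ} ℤ) × (⊕_{i>0} ℤ)` of finitely supported sequences. -/
abbrev Gamma0' : Type := (ℤ →₀ ℤ) × (PosZ →₀ ℤ)

/-- The cross term `(Σ_{l−k=i} a_l c_k)_{i>0}`, as a finitely supported sequence. -/
noncomputable def cross (a c : ℤ →₀ ℤ) : PosZ →₀ ℤ :=
  Finsupp.onFinset
    (((a.support ×ˢ c.support).image fun p => p.1 - p.2).subtype fun i => 0 < i)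
    (fun i => ∑ l ∈ a.support, a l * c (l - i.val))
    (by
      intro i hi
      rw [Finset.mem_subtype]
      obtain ⟨l, hl, hne⟩ := Finset.exists_ne_zero_of_sum_ne_zero hi
      have hc : c (l - i.val) ≠ 0 := fun h => hne (by simp [h])
      exact Finset.mem_image.2 ⟨(l, l - i.val),
        Finset.mem_product.2 ⟨hl, Finsupp.mem_support_iff.2 hc⟩, by ring⟩)

/-- The operation `((aᵢ),(bᵢ)) · ((cᵢ),(dᵢ)) = ((aᵢ+cᵢ), (bᵢ+dᵢ+Σ_{l−k=i} a_l c_k))`. -/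
noncomputable def gmul (x y : Gamma0') : Gamma0' := (x.1 + y.1, x.2 + y.2 + cross x.1 y.1)

/-- The identity element `(0,0)`. -/
noncomputable def gone : Gamma0' := (0, 0)

/-- The proposed inverse `((aᵢ),(bᵢ))⁻¹ = ((−aᵢ), (Σ_{l−k=i} a_l a_k − bᵢ))`. -/
noncomputable def ginv (x : Gamma0') : Gamma0' := (-x.1, cross x.1 x.1 - x.2)

/-- The generator `eⱼ`: standard basis vector at position `j` in the first
coordinate, zero in the second. -/
noncomputable def egen (j : ℤ) : Gamma0' := (Finsupp.single j 1, 0)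

/-- The commutator `[x,y] = x⁻¹y⁻¹xy` in `Γ₀'`. -/
noncomputable def gcomm (x y : Gamma0') : Gamma0' :=
  gmul (gmul (gmul (ginv x) (ginv y)) x) y

/-! The second coordinate of a commutator only sees the antisymmetrisation of `cross`: the
`bᵢ` cancel, and so do the diagonal terms `cross a a` coming from the inverses. For two
generators `eᵢ, eⱼ` with `i < j` only `cross (single j 1) (single i 1)` survives, and it is the
basis vector at `j − i`. -/

theorem cross_apply_eq_sum (a c : ℤ →₀ ℤ) (p : PosZ) :
    cross a c p = a.sum fun l al => al * c (l - p) := rfl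

theorem cross_zero_left (c : ℤ →₀ ℤ) : cross 0 c = 0 := by
  ext p
  simp [cross_apply_eq_sum]

theorem cross_zero_right (a : ℤ →₀ ℤ) : cross a 0 = 0 := by
  ext p
  simp [cross_apply_eq_sum]

theorem cross_add_left (a b c : ℤ →₀ ℤ) : cross (a + b) c = cross a c + cross b c := by
  ext p
  simp only [Finsupp.add_apply, cross_apply_eq_sum]
  exact Finsupp.sum_add_index' (fun _ => zero_mul _) (fun _ _ _ => add_mul _ _ _)

theorem cross_add_right (a c d : ℤ →₀ ℤ) : cross a (c + d) = cross a c + cross a d := by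
  ext p
  simp only [cross_apply_eq_sum, Finsupp.add_apply, mul_add]
  exact Finsupp.sum_add

theorem cross_neg_left (a c : ℤ →₀ ℤ) : cross (-a) c = -cross a c :=
  eq_neg_of_add_eq_zero_left <| by
    rw [← cross_add_left, neg_add_cancel, cross_zero_left]

theorem cross_neg_right (a c : ℤ →₀ ℤ) : cross a (-c) = -cross a c :=
  eq_neg_of_add_eq_zero_left <| by
    rw [← cross_add_right, neg_add_cancel, cross_zero_right]

theorem cross_single_single_of_le {l k : ℤ} (h : l ≤ k) (m n : ℤ) :
    cross (Finsupp.single l m) (Finsupp.single k n) = 0 := by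
  ext p
  have := p.2
  rw [cross_apply_eq_sum, Finsupp.sum_single_index (zero_mul _), Finsupp.single_apply,
    if_neg (by omega), mul_zero, Finsupp.zero_apply]

theorem cross_single_single_of_lt {l k : ℤ} (h : k < l) (m n : ℤ) :
    cross (Finsupp.single l m) (Finsupp.single k n) =
      Finsupp.single (⟨l - k, by omega⟩ : PosZ) (m * n) := by
  ext p
  rw [cross_apply_eq_sum, Finsupp.sum_single_index (zero_mul _), Finsupp.single_apply,
    Finsupp.single_apply]
  by_cases hp : l - k = p
  · rw [if_pos (by omega), if_pos (Subtype.ext hp)]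
  · rw [if_neg (by omega), if_neg (fun h' => hp (congrArg Subtype.val h')), mul_zero]

theorem gcomm_eq (x y : Gamma0') : gcomm x y = (0, cross x.1 y.1 - cross y.1 x.1) := by
  refine Prod.ext ?_ ?_
  · change -x.1 + -y.1 + x.1 + y.1 = 0
    abel
  · change cross x.1 x.1 - x.2 + (cross y.1 y.1 - y.2) + cross (-x.1) (-y.1) + x.2 +
        cross (-x.1 + -y.1) x.1 + y.2 + cross (-x.1 + -y.1 + x.1) y.1 = _
    simp only [cross_add_left, cross_neg_left, cross_neg_right, neg_neg]
    abel

theorem ginv_gcomm (x y : Gamma0') : ginv (gcomm x y) = gcomm y x := by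
  rw [gcomm_eq, gcomm_eq, ginv]
  refine Prod.ext neg_zero ?_
  change cross 0 0 - (cross x.1 y.1 - cross y.1 x.1) = cross y.1 x.1 - cross x.1 y.1
  rw [cross_zero_left, zero_sub, neg_sub]

/-- for `j > i`, the commutator `[eᵢ,eⱼ]` is the element with first
coordinate zero and second coordinate the negative standard basis vector at
position `j − i`; in particular it depends only on `j − i`, and
`[eᵢ,eⱼ] = [eⱼ,eᵢ]⁻¹`. -/
theorem stmt_11 (i j : ℤ) (hij : i < j) :
    gcomm (egen i) (egen j) =
      ((0 : ℤ →₀ ℤ), -(Finsupp.single (⟨j - i, by omega⟩ : PosZ) (1 : ℤ))) ∧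
    gcomm (egen i) (egen j) = ginv (gcomm (egen j) (egen i)) := by
  refine ⟨?_, (ginv_gcomm _ _).symm⟩
  rw [gcomm_eq, egen, egen, cross_single_single_of_le hij.le, cross_single_single_of_lt hij,
    mul_one, zero_sub]
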